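/- arXiv:2305.12886 — 2 statements merged into one kernel-verified Lean document; each statement's English description precedes it below -/
import Mathlib

section
/- If x solves ẋ = Σᵢ wᵢ(x) Aᵢ (x* - x) with each Aᵢ + Aᵢᵀ ⪰ 2c·I for some c > 0 and Σᵢ wᵢ(y) = 1 with wᵢ(y) > 0 for all y, then ‖x(t) - x*‖ ≤ ‖x(0) - x*‖ e^{-ct} for all t ≥ 0. -/
open Matrix

theorem stmt10 {n N : ℕ} (A : Fin N → Matrix (Fin n) (Fin n) ℝ)
    (w : Fin N → (Fin n → ℝ) → ℝ) (xstar : Fin n → ℝ) (c : ℝ) (hc : 0 < c)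
    (hA : ∀ i, ∀ y : Fin n → ℝ, c * (y ⬝ᵥ y) ≤ y ⬝ᵥ (A i).mulVec y)
    (hw : ∀ i y, 0 < w i y) (hwsum : ∀ y, (∑ i, w i y) = 1)
    (hwcont : ∀ i, Continuous (w i))
    (x : ℝ → Fin n → ℝ)
    (hx : ∀ t : ℝ, 0 ≤ t →
      HasDerivAt x (∑ i, w i (x t) • (A i).mulVec (xstar - x t)) t) :
    ∀ t : ℝ, 0 ≤ t →
      Real.sqrt ((x t - xstar) ⬝ᵥ (x t - xstar)) ≤
        Real.sqrt ((x 0 - xstar) ⬝ᵥ (x 0 - xstar)) * Real.exp (-c * t) := by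
  intro t ht
  set V : ℝ → ℝ := fun s => (x s - xstar) ⬝ᵥ (x s - xstar) with hVdef
  set d : ℝ → Fin n → ℝ := fun s => ∑ i, w i (x s) • (A i).mulVec (xstar - x s) with hd
  -- derivative of V
  have hV : ∀ s : ℝ, 0 ≤ s → HasDerivAt V (2 * ((x s - xstar) ⬝ᵥ d s)) s := by
    intro s hs
    have hcomp : ∀ j, HasDerivAt (fun u => x u j - xstar j) (d s j) s := by
      intro j
      exact ((hasDerivAt_pi.mp (hx s hs)) j).sub_const _
    have hsum : HasDerivAt (fun u => ∑ j, (x u j - xstar j) * (x u j - xstar j))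
        (∑ j, (d s j * (x s j - xstar j) + (x s j - xstar j) * d s j)) s :=
      HasDerivAt.fun_sum fun j _ => (hcomp j).mul (hcomp j)
    have : V = fun u => ∑ j, (x u j - xstar j) * (x u j - xstar j) := by
      funext u; simp [hVdef, dotProduct, Pi.sub_apply]
    rw [this]
    convert hsum using 1
    simp only [dotProduct, Finset.mul_sum, Pi.sub_apply]
    exact Finset.sum_congr rfl fun j _ => by ring
  -- bound on the derivative
  have hbound : ∀ s : ℝ, 0 ≤ s →
      2 * ((x s - xstar) ⬝ᵥ d s) ≤ (-(2 * c)) * V s := by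
    intro s hs
    set y : Fin n → ℝ := x s - xstar with hy
    have hsum' : ∀ (v : Fin N → Fin n → ℝ),
        (x s - xstar) ⬝ᵥ (∑ i, v i) = ∑ i, (x s - xstar) ⬝ᵥ v i := by
      intro v
      simp only [dotProduct, Finset.sum_apply, Finset.mul_sum]
      rw [Finset.sum_comm]
    have hneg : xstar - x s = -y := by rw [hy]; abel
    have h1 : (x s - xstar) ⬝ᵥ d s = -∑ i, w i (x s) * (y ⬝ᵥ (A i).mulVec y) := by
      have hds : d s = ∑ i, w i (x s) • (A i).mulVec (xstar - x s) := rfl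
      rw [hds, hsum', ← Finset.sum_neg_distrib]
      refine Finset.sum_congr rfl fun i _ => ?_
      rw [hneg, Matrix.mulVec_neg]
      simp [dotProduct_smul, dotProduct_neg, smul_eq_mul, hy]
    have h2 : ∀ i : Fin N, w i (x s) * (c * (y ⬝ᵥ y)) ≤ w i (x s) * (y ⬝ᵥ (A i).mulVec y) :=
      fun i => mul_le_mul_of_nonneg_left (hA i y) (hw i (x s)).le
    have h3 : c * (y ⬝ᵥ y) ≤ ∑ i, w i (x s) * (y ⬝ᵥ (A i).mulVec y) := by
      calc c * (y ⬝ᵥ y) = (∑ i, w i (x s)) * (c * (y ⬝ᵥ y)) := by rw [hwsum]; ring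
        _ = ∑ i, w i (x s) * (c * (y ⬝ᵥ y)) := by rw [Finset.sum_mul]
        _ ≤ _ := Finset.sum_le_sum fun i _ => h2 i
    rw [h1]
    have : V s = y ⬝ᵥ y := rfl
    rw [this]
    nlinarith [h3]
  -- Gronwall
  have key : ∀ s ∈ Set.Icc (0:ℝ) t, V s ≤ gronwallBound (V 0) (-(2*c)) 0 (s - 0) := by
    apply le_gronwallBound_of_liminf_deriv_right_le
        (f' := fun s => 2 * ((x s - xstar) ⬝ᵥ d s))
    · intro s hs
      exact ((hV s hs.1).continuousAt).continuousWithinAt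
    · intro s hs r hr
      exact ((hV s hs.1).hasDerivWithinAt).liminf_right_slope_le hr
    · exact le_refl _
    · intro s hs
      simpa using hbound s hs.1
  have hVt : V t ≤ V 0 * Real.exp (-(2*c) * t) := by
    have := key t ⟨ht, le_refl t⟩
    rwa [sub_zero, gronwallBound_ε0] at this
  have hV0 : 0 ≤ V 0 := Finset.sum_nonneg fun j _ => mul_self_nonneg _
  calc Real.sqrt (V t) ≤ Real.sqrt (V 0 * Real.exp (-(2*c) * t)) := Real.sqrt_le_sqrt hVt
    _ = Real.sqrt (V 0) * Real.sqrt (Real.exp (-(2*c) * t)) := Real.sqrt_mul hV0 _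
    _ = Real.sqrt (V 0) * Real.exp (-c * t) := by
        rw [show -c * t = (-(2*c) * t) / 2 by ring, Real.exp_half]
end

section
/- Discrete-time version: if x^{t+1} = x^t + h·Σᵢ wᵢ(x^t) Aᵢ (x* - x^t) with Σᵢ wᵢ = 1, wᵢ > 0, and each Aᵢ satisfying c‖y‖² ≤ yᵀAᵢy and ‖Aᵢ y‖ ≤ M‖y‖, then for step size 0 < h < 2c/M², the error ‖x^t - x*‖ is strictly decreasing (unless x^t = x*) and converges to 0 geometrically. -/
open Matrix
noncomputable def toE {n : ℕ} : (Fin n → ℝ) ≃ₗ[ℝ] EuclideanSpace ℝ (Fin n) :=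
  (WithLp.linearEquiv 2 ℝ (Fin n → ℝ)).symm

lemma dot_eq_inner {n : ℕ} (v w : Fin n → ℝ) :
    v ⬝ᵥ w = inner (𝕜 := ℝ) (toE v) (toE w) := by
  simp [toE, PiLp.inner_apply, dotProduct, RCLike.inner_apply, WithLp.linearEquiv_symm_apply, mul_comm]

lemma sqrt_dot {n : ℕ} (v : Fin n → ℝ) :
    Real.sqrt (v ⬝ᵥ v) = ‖toE v‖ := by
  rw [dot_eq_inner, real_inner_self_eq_norm_sq, Real.sqrt_sq (norm_nonneg _)]

lemma contract {n N : ℕ} (A : Fin N → Matrix (Fin n) (Fin n) ℝ)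
    (c M : ℝ) (hc : 0 < c) (hcM : c ≤ M)
    (hA : ∀ i, ∀ y : Fin n → ℝ, c * (y ⬝ᵥ y) ≤ y ⬝ᵥ (A i).mulVec y)
    (hAbd : ∀ i, ∀ y : Fin n → ℝ,
      Real.sqrt ((A i).mulVec y ⬝ᵥ (A i).mulVec y) ≤ M * Real.sqrt (y ⬝ᵥ y))
    (ww : Fin N → ℝ) (hww : ∀ i, 0 ≤ ww i) (hws : (∑ i, ww i) = 1)
    (h : ℝ) (hh0 : 0 < h) (e : Fin n → ℝ) :
    ‖toE (e - h • ∑ i, ww i • (A i).mulVec e)‖ ≤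
      Real.sqrt (1 - 2*h*c + h^2*M^2) * ‖toE e‖ := by
  set B : Fin n → ℝ := ∑ i, ww i • (A i).mulVec e with hB
  have hd : (e ⬝ᵥ B) ≥ c * (e ⬝ᵥ e) := by
    have : e ⬝ᵥ B = ∑ i, ww i * (e ⬝ᵥ (A i).mulVec e) := by
      simp only [hB, dotProduct, Finset.sum_apply, Pi.smul_apply, smul_eq_mul,
        Finset.mul_sum]
      rw [Finset.sum_comm]
      apply Finset.sum_congr rfl; intro i _; apply Finset.sum_congr rfl; intro j _; ring
    rw [this]
    calc c * (e ⬝ᵥ e) = ∑ i, ww i * (c * (e ⬝ᵥ e)) := by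
          rw [← Finset.sum_mul, hws, one_mul]
      _ ≤ ∑ i, ww i * (e ⬝ᵥ (A i).mulVec e) :=
          Finset.sum_le_sum fun i _ => mul_le_mul_of_nonneg_left (hA i e) (hww i)
  have hBnorm : ‖toE B‖ ≤ M * ‖toE e‖ := by
    have : toE B = ∑ i, ww i • toE ((A i).mulVec e) := by
      simp [hB, map_sum, _root_.map_smul]
    rw [this]
    calc ‖∑ i, ww i • toE ((A i).mulVec e)‖ ≤ ∑ i, ‖ww i • toE ((A i).mulVec e)‖ :=
          norm_sum_le _ _
      _ ≤ ∑ i, ww i * (M * ‖toE e‖) := by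
          refine Finset.sum_le_sum fun i _ => ?_
          rw [norm_smul, Real.norm_eq_abs, abs_of_nonneg (hww i)]
          refine mul_le_mul_of_nonneg_left ?_ (hww i)
          have := hAbd i e
          rwa [sqrt_dot, sqrt_dot] at this
      _ = M * ‖toE e‖ := by rw [← Finset.sum_mul, hws, one_mul]
  have hρ0 : 0 ≤ 1 - 2*h*c + h^2*M^2 := by nlinarith [sq_nonneg (1 - h*M)]
  have key : ‖toE (e - h • B)‖^2 ≤ (1 - 2*h*c + h^2*M^2) * ‖toE e‖^2 := by
    have hmap : toE (e - h • B) = toE e - h • toE B := by simp [map_sub, _root_.map_smul]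
    rw [hmap, norm_sub_sq_real, real_inner_smul_right, norm_smul, Real.norm_eq_abs,
      abs_of_nonneg hh0.le, mul_pow]
    have h1 : c * (e ⬝ᵥ e) ≤ inner (𝕜 := ℝ) (toE e) (toE B) := by
      rw [← dot_eq_inner]; exact hd
    have h2 : (e ⬝ᵥ e) = ‖toE e‖^2 := by
      rw [dot_eq_inner, real_inner_self_eq_norm_sq]
    have h3 : ‖toE B‖^2 ≤ M^2 * ‖toE e‖^2 := by
      nlinarith [norm_nonneg (toE B), norm_nonneg (toE e)]
    rw [h2] at h1
    nlinarith [mul_le_mul_of_nonneg_left h3 (sq_nonneg h), mul_le_mul_of_nonneg_left h1 hh0.le]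
  calc ‖toE (e - h • B)‖ = Real.sqrt (‖toE (e - h • B)‖^2) :=
        (Real.sqrt_sq (norm_nonneg _)).symm
    _ ≤ Real.sqrt ((1 - 2*h*c + h^2*M^2) * ‖toE e‖^2) := Real.sqrt_le_sqrt key
    _ = Real.sqrt (1 - 2*h*c + h^2*M^2) * ‖toE e‖ := by
        rw [Real.sqrt_mul hρ0, Real.sqrt_sq (norm_nonneg _)]

theorem stmt18 {n N : ℕ} (A : Fin N → Matrix (Fin n) (Fin n) ℝ)
    (w : Fin N → (Fin n → ℝ) → ℝ) (xstar : Fin n → ℝ)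
    (c M : ℝ) (hc : 0 < c) (hcM : c ≤ M)
    (hA : ∀ i, ∀ y : Fin n → ℝ, c * (y ⬝ᵥ y) ≤ y ⬝ᵥ (A i).mulVec y)
    (hAbd : ∀ i, ∀ y : Fin n → ℝ,
      Real.sqrt ((A i).mulVec y ⬝ᵥ (A i).mulVec y) ≤ M * Real.sqrt (y ⬝ᵥ y))
    (hw : ∀ i y, 0 < w i y) (hwsum : ∀ y, (∑ i, w i y) = 1)
    (h : ℝ) (hh0 : 0 < h) (hh : h < 2 * c / M ^ 2)
    (x : ℕ → Fin n → ℝ)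
    (hx : ∀ t : ℕ, x (t + 1) = x t + h • ∑ i, w i (x t) • (A i).mulVec (xstar - x t)) :
    (∀ t : ℕ, x t ≠ xstar →
      Real.sqrt ((x (t + 1) - xstar) ⬝ᵥ (x (t + 1) - xstar)) <
        Real.sqrt ((x t - xstar) ⬝ᵥ (x t - xstar))) ∧
    (∃ r : ℝ, 0 ≤ r ∧ r < 1 ∧ ∀ t : ℕ,
      Real.sqrt ((x t - xstar) ⬝ᵥ (x t - xstar)) ≤
        Real.sqrt ((x 0 - xstar) ⬝ᵥ (x 0 - xstar)) * r ^ t) := by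
  have hM0 : 0 < M := lt_of_lt_of_le hc hcM
  set ρ : ℝ := 1 - 2*h*c + h^2*M^2 with hρdef
  have hρ0 : 0 ≤ ρ := by nlinarith [sq_nonneg (1 - h*M)]
  have hρ1 : ρ < 1 := by
    have : h * M^2 < 2 * c := by
      rw [lt_div_iff₀ (by positivity)] at hh; linarith
    nlinarith
  set r : ℝ := Real.sqrt ρ with hrdef
  have hr0 : 0 ≤ r := Real.sqrt_nonneg _
  have hr1 : r < 1 := by
    calc r < Real.sqrt 1 := Real.sqrt_lt_sqrt hρ0 hρ1
      _ = 1 := Real.sqrt_one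
  have step : ∀ t : ℕ, ‖toE (x (t+1) - xstar)‖ ≤ r * ‖toE (x t - xstar)‖ := by
    intro t
    have hxe : x (t+1) - xstar =
        (x t - xstar) - h • ∑ i, w i (x t) • (A i).mulVec (x t - xstar) := by
      rw [hx t, ← neg_sub (x t) xstar]
      simp only [Matrix.mulVec_neg, smul_neg, Finset.sum_neg_distrib]
      abel
    rw [hxe]
    exact contract A c M hc hcM hA hAbd (fun i => w i (x t))
      (fun i => (hw i _).le) (hwsum _) h hh0 _
  constructor
  · intro t ht
    rw [sqrt_dot, sqrt_dot]
    have he : toE (x t - xstar) ≠ 0 := by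
      rw [LinearEquiv.map_ne_zero_iff]
      exact sub_ne_zero.mpr ht
    have hpos : 0 < ‖toE (x t - xstar)‖ := norm_pos_iff.mpr he
    calc ‖toE (x (t+1) - xstar)‖ ≤ r * ‖toE (x t - xstar)‖ := step t
      _ < 1 * ‖toE (x t - xstar)‖ := by exact mul_lt_mul_of_pos_right hr1 hpos
      _ = ‖toE (x t - xstar)‖ := one_mul _
  · refine ⟨r, hr0, hr1, fun t => ?_⟩
    rw [sqrt_dot, sqrt_dot]
    induction t with
    | zero => simp
    | succ k ih =>
      calc ‖toE (x (k+1) - xstar)‖ ≤ r * ‖toE (x k - xstar)‖ := step k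
        _ ≤ r * (‖toE (x 0 - xstar)‖ * r ^ k) := by
            exact mul_le_mul_of_nonneg_left ih hr0
        _ = ‖toE (x 0 - xstar)‖ * r ^ (k+1) := by ring
end
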